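/- Let β > 0 and κ > 0, let K̂ : ℝ → ℂ satisfy |K̂(ω)| ≥ κ (1 + ω²)^{−β/2} for all ω, and let φ̂ : ℝ → ℝ be measurable with ∫ (1 + ω²)^{β+3} |φ̂(ω)|² dω < ∞. Then there exists a constant C > 0 (depending only on κ, β and φ̂) such that for every h ∈ (0,1], ∫_{−∞}^{∞} (2πω)⁴ |φ̂(ωh)|² / |K̂(ω)|² dω ≤ C h^{−2β−5}. -/

import Mathlib

open MeasureTheory Real Set Filter

/-- Variance bound from Lemma 1: if `|K̂(ω)| ≥ κ (1+ω²)^{-β/2}` and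
`∫ (1+ω²)^{β+3} |φ̂(ω)|² dω < ∞`, then there is `C > 0` (depending only on
`κ, β, φ̂`) with `∫ (2πω)⁴ |φ̂(ωh)|² / |K̂(ω)|² dω ≤ C h^{-2β-5}` for all `h ∈ (0,1]`. -/
theorem variance_bound (β κ : ℝ) (hβ : 0 < β) (hκ : 0 < κ)
    (Khat : ℝ → ℂ) (hK : ∀ ω : ℝ, κ * (1 + ω ^ 2) ^ (-β / 2) ≤ ‖Khat ω‖)
    (φhat : ℝ → ℝ) (hmeas : Measurable φhat)
    (hφ : Integrable (fun ω : ℝ => (1 + ω ^ 2) ^ (β + 3) * (φhat ω) ^ 2)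
      (volume : Measure ℝ)) :
    ∃ C : ℝ, 0 < C ∧ ∀ h : ℝ, 0 < h → h ≤ 1 →
      ∫ ω : ℝ, (2 * Real.pi * ω) ^ 4 * (φhat (ω * h)) ^ 2 / (‖Khat ω‖) ^ 2 ≤
        C * h ^ (-2 * β - 5) := by
  set G : ℝ → ℝ := fun u => (1 + u ^ 2) ^ (β + 3) * (φhat u) ^ 2 with hGdef
  set I : ℝ := ∫ u : ℝ, G u with hIdef
  have hI0 : 0 ≤ I := integral_nonneg fun u => by positivity
  have hA0 : 0 < (2 * Real.pi) ^ 4 / κ ^ 2 := by positivity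
  refine ⟨(2 * Real.pi) ^ 4 / κ ^ 2 * (I + 1), mul_pos hA0 (by linarith), ?_⟩
  intro h hh0 hh1
  have hhne : h ≠ 0 := ne_of_gt hh0
  have hGint : Integrable (fun ω : ℝ => G (ω * h)) := hφ.comp_mul_right' hhne
  have hrp : ∀ a : ℝ, 0 < h ^ a := fun a => Real.rpow_pos_of_pos hh0 a
  -- pointwise bound
  have key : ∀ ω : ℝ,
      (2 * Real.pi * ω) ^ 4 * (φhat (ω * h)) ^ 2 / (‖Khat ω‖) ^ 2 ≤
      (2 * Real.pi) ^ 4 / κ ^ 2 * h ^ (-2 * β - 4) * G (ω * h) := by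
    intro ω
    have ht0 : (0:ℝ) < 1 + ω ^ 2 := by positivity
    have hs0 : (0:ℝ) < 1 + (ω * h) ^ 2 := by positivity
    have hD : κ * (1 + ω ^ 2) ^ (-β / 2) ≤ ‖Khat ω‖ := hK ω
    have hDpos : 0 < ‖Khat ω‖ :=
      lt_of_lt_of_le (by positivity) hD
    have hM : κ ^ 2 * (1 + ω ^ 2) ^ (-β) ≤ (‖Khat ω‖) ^ 2 := by
      have hsq := mul_self_le_mul_self (by positivity : (0:ℝ) ≤ κ * (1 + ω ^ 2) ^ (-β / 2)) hD
      have : (κ * (1 + ω ^ 2) ^ (-β / 2)) * (κ * (1 + ω ^ 2) ^ (-β / 2))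
          = κ ^ 2 * (1 + ω ^ 2) ^ (-β) := by
        rw [mul_mul_mul_comm, ← Real.rpow_add ht0,
          show -β / 2 + -β / 2 = -β by ring, ← pow_two]
      rw [this] at hsq
      calc κ ^ 2 * (1 + ω ^ 2) ^ (-β) ≤ ‖Khat ω‖ * ‖Khat ω‖ := hsq
        _ = (‖Khat ω‖) ^ 2 := (sq _).symm
    have hMpos : (0:ℝ) < κ ^ 2 * (1 + ω ^ 2) ^ (-β) := by positivity
    have hN0 : (0:ℝ) ≤ (2 * Real.pi * ω) ^ 4 * (φhat (ω * h)) ^ 2 := by positivity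
    have step1 : (2 * Real.pi * ω) ^ 4 * (φhat (ω * h)) ^ 2 / (‖Khat ω‖) ^ 2
        ≤ (2 * Real.pi * ω) ^ 4 * (φhat (ω * h)) ^ 2 / (κ ^ 2 * (1 + ω ^ 2) ^ (-β)) :=
      div_le_div_of_nonneg_left hN0 hMpos hM
    have hrw : (2 * Real.pi * ω) ^ 4 * (φhat (ω * h)) ^ 2 / (κ ^ 2 * (1 + ω ^ 2) ^ (-β))
        = (2 * Real.pi) ^ 4 / κ ^ 2 * (ω ^ 4 * (1 + ω ^ 2) ^ β * (φhat (ω * h)) ^ 2) := by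
      rw [Real.rpow_neg ht0.le]
      field_simp
    -- core power inequality
    have core : ω ^ 4 * (1 + ω ^ 2) ^ β ≤ h ^ (-2 * β - 4) * (1 + (ω * h) ^ 2) ^ (β + 3) := by
      have hb1 : 1 + ω ^ 2 ≤ (1 + (ω * h) ^ 2) / h ^ 2 := by
        rw [le_div_iff₀ (by positivity)]
        nlinarith
      have hb2 : (1 + ω ^ 2) ^ β ≤ ((1 + (ω * h) ^ 2) / h ^ 2) ^ β :=
        Real.rpow_le_rpow ht0.le hb1 hβ.le
      have hb3 : ((1 + (ω * h) ^ 2) / h ^ 2) ^ β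
          = (1 + (ω * h) ^ 2) ^ β * (h ^ 2) ^ (-β : ℝ) := by
        rw [Real.div_rpow hs0.le (by positivity), Real.rpow_neg (by positivity), div_eq_mul_inv]
      have hb4 : (h ^ 2 : ℝ) ^ (-β : ℝ) = h ^ (-2 * β) := by
        rw [← Real.rpow_natCast h 2, ← Real.rpow_mul hh0.le]
        norm_num
      have hw4 : ω ^ 4 = (ω * h) ^ 4 * h ^ ((-4 : ℝ)) := by
        have : h ^ ((-4:ℝ)) = (h ^ 4)⁻¹ := by
          rw [← Real.rpow_natCast h 4, ← Real.rpow_neg hh0.le]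
          norm_num
        rw [this]
        field_simp
      have hs4 : (ω * h) ^ 4 ≤ (1 + (ω * h) ^ 2) ^ 2 := by nlinarith [sq_nonneg (ω*h), sq_nonneg ((ω*h)^2)]
      have h2β : (1 + (ω * h) ^ 2) ^ (2:ℕ) * (1 + (ω * h) ^ 2) ^ β
          = (1 + (ω * h) ^ 2) ^ (β + 2) := by
        rw [← Real.rpow_natCast (1 + (ω * h) ^ 2) 2, ← Real.rpow_add hs0]
        congr 1
        push_cast
        ring
      have hexp : (1 + (ω * h) ^ 2) ^ (β + 2) ≤ (1 + (ω * h) ^ 2) ^ (β + 3) :=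
        Real.rpow_le_rpow_of_exponent_le (by nlinarith [sq_nonneg (ω*h)]) (by linarith)
      calc ω ^ 4 * (1 + ω ^ 2) ^ β
          ≤ ω ^ 4 * ((1 + (ω * h) ^ 2) ^ β * h ^ (-2 * β)) := by
            rw [← hb4, ← hb3]
            exact mul_le_mul_of_nonneg_left hb2 (by positivity)
        _ = ((ω * h) ^ 4 * (1 + (ω * h) ^ 2) ^ β) * (h ^ ((-4:ℝ)) * h ^ (-2 * β)) := by
            rw [hw4]; ring
        _ ≤ ((1 + (ω * h) ^ 2) ^ 2 * (1 + (ω * h) ^ 2) ^ β) * (h ^ ((-4:ℝ)) * h ^ (-2 * β)) := by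
            have : (0:ℝ) ≤ h ^ ((-4:ℝ)) * h ^ (-2 * β) := by positivity
            apply mul_le_mul_of_nonneg_right _ this
            exact mul_le_mul_of_nonneg_right hs4 (by positivity)
        _ = (1 + (ω * h) ^ 2) ^ (β + 2) * h ^ (-2 * β - 4) := by
            rw [h2β, ← Real.rpow_add hh0]
            ring_nf
        _ ≤ h ^ (-2 * β - 4) * (1 + (ω * h) ^ 2) ^ (β + 3) := by
            rw [mul_comm]
            exact mul_le_mul_of_nonneg_left hexp (hrp _).le
    calc (2 * Real.pi * ω) ^ 4 * (φhat (ω * h)) ^ 2 / (‖Khat ω‖) ^ 2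
        ≤ (2 * Real.pi) ^ 4 / κ ^ 2 * (ω ^ 4 * (1 + ω ^ 2) ^ β * (φhat (ω * h)) ^ 2) := by
          rw [← hrw]; exact step1
      _ ≤ (2 * Real.pi) ^ 4 / κ ^ 2 *
            (h ^ (-2 * β - 4) * (1 + (ω * h) ^ 2) ^ (β + 3) * (φhat (ω * h)) ^ 2) := by
          apply mul_le_mul_of_nonneg_left _ hA0.le
          exact mul_le_mul_of_nonneg_right core (by positivity)
      _ = (2 * Real.pi) ^ 4 / κ ^ 2 * h ^ (-2 * β - 4) * G (ω * h) := by
          simp only [hGdef]; ring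
  -- integrate the bound
  have hmono : (∫ ω : ℝ, (2 * Real.pi * ω) ^ 4 * (φhat (ω * h)) ^ 2 / (‖Khat ω‖) ^ 2)
      ≤ ∫ ω : ℝ, (2 * Real.pi) ^ 4 / κ ^ 2 * h ^ (-2 * β - 4) * G (ω * h) := by
    apply integral_mono_of_nonneg
    · filter_upwards with ω
      have hDpos : 0 < ‖Khat ω‖ := lt_of_lt_of_le (by positivity) (hK ω)
      positivity
    · exact (hGint.const_mul _)
    · filter_upwards with ω
      exact key ω
  have hval : (∫ ω : ℝ, (2 * Real.pi) ^ 4 / κ ^ 2 * h ^ (-2 * β - 4) * G (ω * h))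
      = (2 * Real.pi) ^ 4 / κ ^ 2 * h ^ (-2 * β - 4) * (h⁻¹ * I) := by
    rw [integral_const_mul, Measure.integral_comp_mul_right G h, smul_eq_mul,
      abs_of_pos (inv_pos.mpr hh0)]
  have hfin : (2 * Real.pi) ^ 4 / κ ^ 2 * h ^ (-2 * β - 4) * (h⁻¹ * I)
      ≤ (2 * Real.pi) ^ 4 / κ ^ 2 * (I + 1) * h ^ (-2 * β - 5) := by
    have hinv : h⁻¹ = h ^ ((-1:ℝ)) := (Real.rpow_neg_one h).symm
    have hmul : h ^ (-2 * β - 4) * h ^ ((-1:ℝ)) = h ^ (-2 * β - 5) := by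
      rw [← Real.rpow_add hh0]; congr 1; ring
    rw [hinv]
    calc (2 * Real.pi) ^ 4 / κ ^ 2 * h ^ (-2 * β - 4) * (h ^ ((-1:ℝ)) * I)
        = (2 * Real.pi) ^ 4 / κ ^ 2 * I * (h ^ (-2 * β - 4) * h ^ ((-1:ℝ))) := by ring
      _ = (2 * Real.pi) ^ 4 / κ ^ 2 * I * h ^ (-2 * β - 5) := by rw [hmul]
      _ ≤ (2 * Real.pi) ^ 4 / κ ^ 2 * (I + 1) * h ^ (-2 * β - 5) := by
          exact mul_le_mul_of_nonneg_right
            (mul_le_mul_of_nonneg_left (by linarith) hA0.le) (hrp _).le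
  calc (∫ ω : ℝ, (2 * Real.pi * ω) ^ 4 * (φhat (ω * h)) ^ 2 / (‖Khat ω‖) ^ 2)
      ≤ (2 * Real.pi) ^ 4 / κ ^ 2 * h ^ (-2 * β - 4) * (h⁻¹ * I) := hval ▸ hmono
    _ ≤ (2 * Real.pi) ^ 4 / κ ^ 2 * (I + 1) * h ^ (-2 * β - 5) := hfin
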